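/- arXiv:1803.09684 — 4 statements merged into one kernel-verified Lean document; each statement's English description precedes it below -/
import Mathlib

section
/- For every positive integer n, every real number β, and every real number ω with 0 < ω < 1/√n, there exist integers r, d, s such that 1 ≤ r ≤ 1/(√n·ω), |s + 2nβd + nβ²r| < √n·ω, and 0 ≤ nd² − sr ≤ n. -/
/-!
Put `c = √n ω < 1`, `y = βr + d` and `L = s + 2nβd + nβ²r`, so that `nd² - sr = n y² - r L`.
The forms `r`, `y`, `L` are unimodular, so Minkowski's linear forms theorem with the bounds
`⌊1/c⌋ + 1`, `1`, `c` (whose product exceeds `1`) gives integers with `1 ≤ r ≤ 1/c`, `|y| < 1`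
and `|L| < c`. Then `0 ≤ n y² < n` and `|r L| < 1`, so the integer `nd² - sr` lies strictly
between `-1` and `n + 1`.
-/

open MeasureTheory Module Submodule Set Matrix

theorem Matrix.exists_ne_zero_abs_mulVec_intCast_lt {ι : Type*} [Fintype ι] [DecidableEq ι]
    (A : Matrix ι ι ℝ) (hA : A.det ≠ 0) (w : ι → ℝ) (hw : ∀ i, 0 ≤ w i)
    (hdet : |A.det| < ∏ i, w i) :
    ∃ v : ι → ℤ, v ≠ 0 ∧ ∀ i, |(A *ᵥ fun j ↦ (v j : ℝ)) i| < w i := by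
  let S : Set (ι → ℝ) := A.toLin' ⁻¹' univ.pi fun i ↦ Ioo (-w i) (w i)
  have h_symm : ∀ x ∈ S, -x ∈ S := fun x hx i _ ↦ by
    have := hx i (mem_univ i)
    simp only [map_neg, Pi.neg_apply, mem_Ioo] at this ⊢
    constructor <;> linarith [this.1, this.2]
  have h_conv : Convex ℝ S := (convex_pi fun i _ ↦ convex_Ioo _ _).linear_preimage _
  have h_vol : volume (ZSpan.fundamentalDomain (Pi.basisFun ℝ ι)) * 2 ^ finrank ℝ (ι → ℝ)
      < volume S := by
    have hdet0 : 0 < |A.det| := abs_pos.2 hA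
    have hprod : ∏ i, (w i - -w i) = 2 ^ Fintype.card ι * ∏ i, w i := by
      simp only [sub_neg_eq_add, ← two_mul, Finset.prod_mul_distrib, Finset.prod_const,
        Finset.card_univ]
    rw [ZSpan.volume_fundamentalDomain, Measure.addHaar_preimage_linearMap _ (by simpa using hA),
      volume_pi_pi, LinearMap.det_toLin', Module.finrank_fintype_fun_eq_card]
    simp only [Real.volume_Ioo]
    rw [← ENNReal.ofReal_prod_of_nonneg fun i _ ↦ by linarith [hw i], hprod,
      ← ENNReal.ofReal_mul (abs_nonneg _), ← Pi.basisFun_det_apply, Basis.det_self, abs_one,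
      ENNReal.ofReal_one, one_mul, ← ENNReal.ofReal_ofNat 2, ← ENNReal.ofReal_pow zero_le_two,
      ENNReal.ofReal_lt_ofReal_iff_of_nonneg (by positivity),
      abs_inv, inv_mul_eq_div, lt_div_iff₀ hdet0]
    gcongr
  have : Countable (span ℤ (range (Pi.basisFun ℝ ι))).toAddSubgroup :=
    inferInstanceAs (Countable (span ℤ (range (Pi.basisFun ℝ ι))))
  obtain ⟨⟨x, hx⟩, hx0, hxS⟩ := exists_ne_zero_mem_lattice_of_measure_mul_two_pow_lt_measure
    (ZSpan.isAddFundamentalDomain' (Pi.basisFun ℝ ι) volume) h_symm h_conv h_vol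
  have hxℤ : ∀ i, ∃ z : ℤ, (z : ℝ) = x i :=
    (Pi.basisFun ℝ ι).mem_span_iff_repr_mem ℤ x |>.mp hx
  choose v hv using hxℤ
  have hxv : (fun j ↦ (v j : ℝ)) = x := funext hv
  refine ⟨v, fun h ↦ hx0 (Subtype.ext ?_), fun i ↦ abs_lt.2 ?_⟩
  · ext i; simp [← hv, h]
  · simpa [hxv] using hxS i (mem_univ i)

theorem exists_pos_int_abs_lt_of_lowerTriangular (β a b : ℝ) {N c : ℝ} (hc0 : 0 < c)
    (hc : c ≤ 1) (hNc : 1 < N * c) :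
    ∃ r d s : ℤ, 0 < r ∧ (r : ℝ) < N ∧ |β * r + d| < 1 ∧ |s + a * d + b * r| < c := by
  have hN : 0 < N := by nlinarith
  let A : Matrix (Fin 3) (Fin 3) ℝ := !![1, 0, 0; β, 1, 0; b, a, 1]
  have hA : A.det = 1 := by simp [A, det_fin_three]
  obtain ⟨v, hv0, hv⟩ := exists_ne_zero_abs_mulVec_intCast_lt A (by simp [hA]) ![N, 1, c]
    (by simp [Fin.forall_fin_succ, hN.le, hc0.le]) (by simp [hA, Fin.prod_univ_three, hNc])
  have h0 : |(v 0 : ℝ)| < N := by simpa [A, mulVec, dotProduct, Fin.sum_univ_three] using hv 0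
  have h1 : |β * v 0 + v 1| < 1 := by simpa [A, mulVec, dotProduct, Fin.sum_univ_three] using hv 1
  have h2 : |b * v 0 + a * v 1 + v 2| < c := by
    simpa [A, mulVec, dotProduct, Fin.sum_univ_three] using hv 2
  have hr : v 0 ≠ 0 := by
    intro hr
    simp only [hr, Int.cast_zero, mul_zero, zero_add] at h1 h2
    have hd : v 1 = 0 := by rw [← Int.abs_lt_one_iff]; exact_mod_cast h1
    simp only [hd, Int.cast_zero, mul_zero, zero_add] at h2
    have hs : v 2 = 0 := by rw [← Int.abs_lt_one_iff]; exact_mod_cast h2.trans_le hc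
    exact hv0 (by ext i; fin_cases i <;> assumption)
  rcases hr.lt_or_gt with hr | hr
  · refine ⟨-v 0, -v 1, -v 2, by omega, ?_, ?_, ?_⟩ <;> push_cast
    · linarith [abs_lt.1 h0]
    · rw [← abs_neg]; convert h1 using 2; ring
    · rw [← abs_neg]; convert h2 using 2; ring
  · refine ⟨v 0, v 1, v 2, hr, (abs_lt.1 h0).2, h1, ?_⟩
    convert h2 using 2; ring

theorem mul_sq_sub_mul_mem_Icc (n : ℕ) (β : ℝ) (r d s : ℤ) (hy : |β * r + d| < 1)
    (hL : |r * (s + 2 * n * β * d + n * β ^ 2 * r)| < 1) :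
    (n : ℤ) * d ^ 2 - s * r ∈ Set.Icc 0 (n : ℤ) := by
  set q : ℤ := n * d ^ 2 - s * r
  have hq : (q : ℝ) = n * (β * r + d) ^ 2 - r * (s + 2 * n * β * d + n * β ^ 2 * r) := by
    simp only [q]; push_cast; ring
  have hy2 : (β * r + d) ^ 2 < 1 := (sq_lt_one_iff_abs_lt_one _).2 hy
  have hL' := abs_lt.1 hL
  have hn : (0 : ℝ) ≤ n := n.cast_nonneg
  have hlo : (-1 : ℤ) < q := by
    suffices (-1 : ℝ) < q by exact_mod_cast this
    rw [hq]; nlinarith [sq_nonneg (β * r + d)]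
  have hhi : q < n + 1 := by
    suffices (q : ℝ) < n + 1 by exact_mod_cast this
    rw [hq]; nlinarith
  exact ⟨by omega, by omega⟩

/-- Lemma 4.5: for every positive integer `n`, real `β`, and `0 < ω < 1/√n`,
there exist integers `r, d, s` with `1 ≤ r ≤ 1/(√n·ω)`,
`|s + 2nβd + nβ²r| < √n·ω`, and `0 ≤ nd² − sr ≤ n`. -/
theorem stmt_0 (n : ℕ) (hn : 0 < n) (β ω : ℝ) (hω : 0 < ω)
    (hω' : ω < 1 / Real.sqrt n) :
    ∃ r d s : ℤ,
      1 ≤ r ∧ (r : ℝ) ≤ 1 / (Real.sqrt n * ω) ∧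
      |(s : ℝ) + 2 * n * β * d + n * β ^ 2 * r| < Real.sqrt n * ω ∧
      0 ≤ (n : ℤ) * d ^ 2 - s * r ∧ (n : ℤ) * d ^ 2 - s * r ≤ n := by
  set c := Real.sqrt n * ω
  have hsqrt : 0 < Real.sqrt n := Real.sqrt_pos.2 (by exact_mod_cast hn)
  have hc0 : 0 < c := mul_pos hsqrt hω
  have hc1 : c < 1 := by rwa [lt_div_iff₀ hsqrt, mul_comm] at hω'
  have hNc : 1 < (⌊1 / c⌋ + 1 : ℤ) * c := by
    rw [← div_lt_iff₀ hc0]; exact_mod_cast Int.lt_floor_add_one (1 / c)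
  obtain ⟨r, d, s, hr0, hrN, hy, hL⟩ :=
    exists_pos_int_abs_lt_of_lowerTriangular β (2 * n * β) (n * β ^ 2) hc0 hc1.le hNc
  have hrX : (r : ℝ) ≤ 1 / c :=
    Int.le_floor.1 (Int.lt_add_one_iff.1 (by exact_mod_cast hrN))
  have hrL : |r * (s + 2 * n * β * d + n * β ^ 2 * r)| < 1 := by
    rw [abs_mul, abs_of_pos (by exact_mod_cast hr0)]
    calc (r : ℝ) * |s + 2 * n * β * d + n * β ^ 2 * r| < 1 / c * c :=
          mul_lt_mul' hrX hL (abs_nonneg _) (by positivity)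
      _ = 1 := one_div_mul_cancel hc0.ne'
  obtain ⟨hq0, hqn⟩ := mul_sq_sub_mul_mem_Icc n β r d s hy hrL
  exact ⟨r, d, s, hr0, hrX, hL, hq0, hqn⟩
end

section
/- For every positive integer n and all real numbers β and ω with ω > 0, there exists a triple of integers (r, d, s) ≠ (0, 0, 0) such that |s + 2n(β+iω)d + n(β+iω)²r|² / (4nω²) < n + 1 and nd² − rs ≥ −1, where i denotes the imaginary unit and |·| is the complex absolute value. -/
lemma aux_small_form (β ω : ℝ) (hω : 0 < ω) :
    ∃ p q : ℤ, ¬(p = 0 ∧ q = 0) ∧ (β * p + q) ^ 2 + ω ^ 2 * p ^ 2 < 2 * ω := by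
  rcases le_or_gt ω (1 / 2) with h | h
  · have hsq : 0 < Real.sqrt ω := Real.sqrt_pos.2 hω
    set N : ℕ := ⌊1 / Real.sqrt ω⌋₊ with hNdef
    have hω1 : ω ≤ 1 := by linarith
    have hs1 : Real.sqrt ω ≤ 1 := by
      rw [show (1:ℝ) = Real.sqrt 1 by simp]
      exact Real.sqrt_le_sqrt hω1
    have hNpos : 0 < N := by
      apply Nat.floor_pos.2
      rw [le_div_iff₀ hsq]; simpa using hs1
    obtain ⟨j, k, hk0, hkN, hjk⟩ := Real.exists_int_int_abs_mul_sub_le β hNpos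
    refine ⟨k, -j, ?_, ?_⟩
    · rintro ⟨hk, -⟩; omega
    · have hkR : (0:ℝ) < (k:ℝ) := by exact_mod_cast hk0
      have hkNR : (k:ℝ) ≤ (N:ℝ) := by exact_mod_cast hkN
      have hNle : (N:ℝ) ≤ 1 / Real.sqrt ω := Nat.floor_le (by positivity)
      have hNgt : 1 / Real.sqrt ω < (N:ℝ) + 1 := Nat.lt_floor_add_one _
      have hN1pos : (0:ℝ) < (N:ℝ) + 1 := by positivity
      -- first term
      have h1 : (β * k + (-j : ℤ)) ^ 2 ≤ (1 / ((N:ℝ) + 1)) ^ 2 := by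
        have : |(k:ℝ) * β - j| ^ 2 ≤ (1 / ((N:ℝ) + 1)) ^ 2 := by
          apply pow_le_pow_left₀ (abs_nonneg _) hjk
        rw [sq_abs] at this
        calc (β * k + (-j : ℤ)) ^ 2 = ((k:ℝ) * β - j) ^ 2 := by push_cast; ring
          _ ≤ _ := this
      have h2 : (1 / ((N:ℝ) + 1)) ^ 2 < ω := by
        have hlt : 1 / ((N:ℝ) + 1) < Real.sqrt ω := by
          rw [div_lt_iff₀ hN1pos, ← div_lt_iff₀' hsq]
          exact hNgt
        have h0 : (0:ℝ) ≤ 1 / ((N:ℝ) + 1) := by positivity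
        calc (1 / ((N:ℝ) + 1)) ^ 2 < Real.sqrt ω ^ 2 := by
              apply sq_lt_sq' (by linarith) hlt
          _ = ω := Real.sq_sqrt hω.le
      have h3 : ω ^ 2 * (k:ℝ) ^ 2 ≤ ω := by
        have hk2 : (k:ℝ) ^ 2 ≤ (1 / Real.sqrt ω) ^ 2 := by
          apply sq_le_sq' (by linarith) (le_trans hkNR hNle)
        have : (1 / Real.sqrt ω) ^ 2 = 1 / ω := by
          rw [div_pow, one_pow, Real.sq_sqrt hω.le]
        rw [this] at hk2
        calc ω ^ 2 * (k:ℝ) ^ 2 ≤ ω ^ 2 * (1 / ω) := by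
              exact mul_le_mul_of_nonneg_left hk2 (by positivity)
          _ = ω := by field_simp
      push_cast
      push_cast at h1
      linarith
  · refine ⟨0, 1, by simp, ?_⟩
    push_cast
    norm_num
    linarith

/-- Proposition 4.4: for every positive integer `n` and reals `β`, `ω > 0`,
there exists a nonzero triple of integers `(r, d, s)` with
`|s + 2n(β+iω)d + n(β+iω)²r|² / (4nω²) < n + 1` and `nd² − rs ≥ −1`. -/
theorem stmt_1 (n : ℕ) (hn : 0 < n) (β ω : ℝ) (hω : 0 < ω) :
    ∃ r d s : ℤ, (r, d, s) ≠ (0, 0, 0) ∧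
      (‖(s : ℂ) + 2 * n * (β + ω * Complex.I) * d +
          n * (β + ω * Complex.I) ^ 2 * r‖) ^ 2 / (4 * n * ω ^ 2) < n + 1 ∧
      (n : ℤ) * d ^ 2 - r * s ≥ -1 := by
  obtain ⟨p, q, hpq, hlt⟩ := aux_small_form β ω hω
  refine ⟨p ^ 2, p * q, n * q ^ 2, ?_, ?_, ?_⟩
  · simp only [ne_eq, Prod.mk.injEq, not_and]
    intro hp hd hs
    apply hpq
    constructor
    · exact pow_eq_zero_iff (n := 2) (by norm_num) |>.mp hp
    · have : (q:ℤ) ^ 2 = 0 := by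
        rcases mul_eq_zero.mp hs with h | h
        · exact absurd h (by exact_mod_cast hn.ne')
        · exact h
      exact pow_eq_zero_iff (n := 2) (by norm_num) |>.mp this
  · set z : ℂ := β + ω * Complex.I with hz
    have hZ : ((n * q ^ 2 : ℤ) : ℂ) + 2 * n * z * ((p * q : ℤ) : ℂ) +
        n * z ^ 2 * ((p ^ 2 : ℤ) : ℂ) = n * ((q : ℂ) + z * p) ^ 2 := by
      push_cast; ring
    rw [hZ]
    have hns : ‖(n:ℂ) * ((q : ℂ) + z * p) ^ 2‖ ^ 2
        = (n:ℝ) ^ 2 * ((β * p + q) ^ 2 + ω ^ 2 * p ^ 2) ^ 2 := by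
      rw [norm_mul, norm_pow, mul_pow, ← pow_mul]
      have h1 : ‖(n:ℂ)‖ = (n:ℝ) := by
        simp
      have h2 : ‖(q : ℂ) + z * p‖ ^ 2 = (β * p + q) ^ 2 + ω ^ 2 * p ^ 2 := by
        rw [Complex.sq_norm, Complex.normSq_apply, hz]
        simp [Complex.add_re, Complex.add_im, Complex.mul_re, Complex.mul_im]
        ring
      rw [h1, show (2 * 2 : ℕ) = 2 * 2 from rfl, pow_mul, h2]
    rw [hns]
    set c : ℝ := (β * p + q) ^ 2 + ω ^ 2 * p ^ 2 with hc
    have hc0 : 0 ≤ c := by positivity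
    have hnR : (1:ℝ) ≤ (n:ℝ) := by exact_mod_cast hn
    rw [div_lt_iff₀ (by positivity)]
    have hcsq : c ^ 2 < 4 * ω ^ 2 := by nlinarith
    nlinarith [mul_pos hω hω]
  · have : (n:ℤ) * (p * q) ^ 2 - p ^ 2 * (n * q ^ 2) = 0 := by ring
    omega
end

section
/- Let n be a positive integer and ω > 0 a real number. Then for all integers r, d, s satisfying nd² − rs = −1, one has ((s − nω²r)² + 4n²ω²d²) / (4nω²) ≥ (1/(4n))·(1/ω + nω)² − 1. -/
/-!
Write `A = nω²`. Substituting `nd² = rs − 1` turns the numerator into `(s + Ar)² − 4A`, and the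
right-hand side equals `(1 + A)²/(4A) − 1`, so the estimate amounts to `1 + A ≤ |s + Ar|`.
This holds because `rs = nd² + 1 > 0` forces `r` and `s` to be nonzero integers of the same sign,
whence `|s + Ar| = |s| + A|r| ≥ 1 + A`.
-/

lemma one_add_le_abs_add_mul_of_mul_pos {r s : ℤ} (hrs : 0 < r * s) {A : ℝ} (hA : 0 ≤ A) :
    1 + A ≤ |(s : ℝ) + A * r| := by
  rcases pos_and_pos_or_neg_and_neg_of_mul_pos hrs with ⟨hr, hs⟩ | ⟨hr, hs⟩
  · have hr' : (1 : ℝ) ≤ r := by exact_mod_cast hr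
    have hs' : (1 : ℝ) ≤ s := by exact_mod_cast hs
    calc 1 + A ≤ s + A * r := by nlinarith
      _ ≤ |(s : ℝ) + A * r| := le_abs_self _
  · have hr' : (r : ℝ) ≤ -1 := by exact_mod_cast Int.le_sub_one_of_lt hr
    have hs' : (s : ℝ) ≤ -1 := by exact_mod_cast Int.le_sub_one_of_lt hs
    calc 1 + A ≤ -(s + A * r) := by nlinarith
      _ ≤ |(s : ℝ) + A * r| := neg_le_abs _

lemma sq_sub_mul_add_eq_sq_add_mul_sub {n ω r d s : ℝ} (h : n * d ^ 2 - r * s = -1) :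
    (s - n * ω ^ 2 * r) ^ 2 + 4 * n ^ 2 * ω ^ 2 * d ^ 2 =
      (s + n * ω ^ 2 * r) ^ 2 - 4 * (n * ω ^ 2) := by
  linear_combination 4 * n * ω ^ 2 * h

lemma one_div_mul_inv_add_mul_sq {n ω : ℝ} (hn : n ≠ 0) (hω : ω ≠ 0) :
    1 / (4 * n) * (1 / ω + n * ω) ^ 2 = (1 + n * ω ^ 2) ^ 2 / (4 * (n * ω ^ 2)) := by
  field_simp

/-- Key estimate in Proposition 2.13: if `nd² − rs = −1` then
`((s − nω²r)² + 4n²ω²d²)/(4nω²) ≥ (1/(4n))(1/ω + nω)² − 1`. -/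
theorem stmt_5 (n : ℕ) (hn : 0 < n) (ω : ℝ) (hω : 0 < ω)
    (r d s : ℤ) (h : (n : ℤ) * d ^ 2 - r * s = -1) :
    (((s : ℝ) - n * ω ^ 2 * r) ^ 2 + 4 * n ^ 2 * ω ^ 2 * d ^ 2) / (4 * n * ω ^ 2) ≥
      (1 / (4 * n)) * (1 / ω + n * ω) ^ 2 - 1 := by
  have hA : 0 < (n : ℝ) * ω ^ 2 := by positivity
  have hrs : 0 < r * s := by nlinarith [sq_nonneg d]
  have hsq : (1 + n * ω ^ 2) ^ 2 ≤ ((s : ℝ) + n * ω ^ 2 * r) ^ 2 := by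
    rw [sq_le_sq, abs_of_pos (by positivity : (0 : ℝ) < 1 + n * ω ^ 2)]
    exact one_add_le_abs_add_mul_of_mul_pos hrs hA.le
  rw [sq_sub_mul_add_eq_sq_add_mul_sub (by exact_mod_cast h),
    one_div_mul_inv_add_mul_sq (by positivity) hω.ne', ge_iff_le]
  calc (1 + n * ω ^ 2) ^ 2 / (4 * (n * ω ^ 2)) - 1
      = ((1 + n * ω ^ 2) ^ 2 - 4 * (n * ω ^ 2)) / (4 * (n * ω ^ 2)) := by field_simp
    _ ≤ (((s : ℝ) + n * ω ^ 2 * r) ^ 2 - 4 * (n * ω ^ 2)) / (4 * (n * ω ^ 2)) := by gcongr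
    _ = _ := by ring
end

section
/- For every positive integer n and every real number M, there exists a real number ω > 1 such that for all integers r, d, s with nd² − rs = −1, one has ((s − nω²r)² + 4n²ω²d²) / (4nω²) > M. -/
/-!
Put `p = nω²`. On the quadric `rs = nd² + 1` the numerator simplifies:
`(s - pr)² + 4npd² = (s - pr)² + 4p(rs - 1) = (s + pr)² - 4p`.
Since `rs ≥ 1`, the integers `r` and `s` are nonzero of the same sign, so `|s + pr| ≥ 1 + p`, and the
ratio is at least `((1 + p)² - 4p)/(4p) = (p - 1)²/(4p) > (p - 2)/4`. As `p ≥ ω²`, any `ω` with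
`ω² ≥ 4M + 2` works.
-/

lemma one_add_le_abs_add_mul {r s : ℤ} (hrs : 0 < r * s) {p : ℝ} (hp : 0 ≤ p) :
    1 + p ≤ |(s : ℝ) + p * r| := by
  rcases mul_pos_iff.mp hrs with ⟨hr, hs⟩ | ⟨hr, hs⟩
  · have hr1 : (1 : ℝ) ≤ r := by exact_mod_cast hr
    have hs1 : (1 : ℝ) ≤ s := by exact_mod_cast hs
    calc 1 + p ≤ s + p * r := by nlinarith
      _ ≤ |(s : ℝ) + p * r| := le_abs_self _
  · have hr1 : (r : ℝ) ≤ -1 := by exact_mod_cast Int.le_sub_one_of_lt hr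
    have hs1 : (s : ℝ) ≤ -1 := by exact_mod_cast Int.le_sub_one_of_lt hs
    calc 1 + p ≤ -(s + p * r) := by nlinarith
      _ ≤ |(s : ℝ) + p * r| := neg_le_abs _

lemma sub_two_div_four_lt_of_mul_sub_mul_eq_neg_one {n p : ℝ} (hn : 0 ≤ n) (hp : 0 < p)
    {r d s : ℤ} (h : n * d ^ 2 - r * s = -1) :
    (p - 2) / 4 < (((s : ℝ) - p * r) ^ 2 + 4 * n * p * d ^ 2) / (4 * p) := by
  have hrs : (1 : ℝ) ≤ r * s := by nlinarith [sq_nonneg (d : ℝ)]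
  have hnum : ((s : ℝ) - p * r) ^ 2 + 4 * n * p * d ^ 2 = ((s : ℝ) + p * r) ^ 2 - 4 * p := by
    linear_combination 4 * p * h
  have habs := one_add_le_abs_add_mul (r := r) (s := s) (by exact_mod_cast hrs) hp.le
  have hsq : (1 + p) ^ 2 ≤ ((s : ℝ) + p * r) ^ 2 := by
    rw [← sq_abs ((s : ℝ) + p * r)]
    exact pow_le_pow_left₀ (by positivity) habs 2
  rw [hnum, lt_div_iff₀ (by positivity)]
  nlinarith

/-- Unboundedness of the spherical systolic ratio: for every positive integer `n`
and real `M`, there exists `ω > 1` such that every integer solution of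
`nd² − rs = −1` has `((s − nω²r)² + 4n²ω²d²)/(4nω²) > M`. -/
theorem stmt_6 (n : ℕ) (hn : 0 < n) (M : ℝ) :
    ∃ ω : ℝ, 1 < ω ∧ ∀ r d s : ℤ, (n : ℤ) * d ^ 2 - r * s = -1 →
      (((s : ℝ) - n * ω ^ 2 * r) ^ 2 + 4 * n ^ 2 * ω ^ 2 * d ^ 2) / (4 * n * ω ^ 2) > M := by
  set ω := √(4 * |M| + 3)
  have hω : ω ^ 2 = 4 * |M| + 3 := Real.sq_sqrt (by positivity)
  have hn1 : (1 : ℝ) ≤ n := by exact_mod_cast hn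
  refine ⟨ω, by nlinarith [abs_nonneg M, Real.sqrt_nonneg (4 * |M| + 3)], fun r d s h => ?_⟩
  have hp : ω ^ 2 ≤ n * ω ^ 2 := le_mul_of_one_le_left (sq_nonneg ω) hn1
  have key := sub_two_div_four_lt_of_mul_sub_mul_eq_neg_one (n.cast_nonneg (α := ℝ))
    (p := n * ω ^ 2) (by positivity) (r := r) (d := d) (s := s) (by exact_mod_cast h)
  calc M ≤ (n * ω ^ 2 - 2) / 4 := by linarith [le_abs_self M]
    _ < _ := key
    _ = _ := by ring
end
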